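/- arXiv:0804.1308 — 3 statements merged into one kernel-verified Lean document; each statement's English description precedes it below -/
import Mathlib

section
/- Let σ ∈ ℂ with Re σ > 0 and let k be a nonzero real number. Then the polynomial P(λ) = λ⁴ − λ² + σλ + k², counted with multiplicity, has exactly two roots with strictly positive real part and exactly two roots with strictly negative real part. -/
/-!
Argument principle along the imaginary axis. When `P` has no root on the imaginary axis,
`P (I * y) = ‖P (I * y)‖ * exp (θ y * I)` with `θ y = ∑ z, arg (I * y - z)` continuous; each root
contributes `π / 2` to `θ (+∞)`, and `3π / 2` or `-π / 2` to `θ (-∞)` according as it lies right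
or left of the axis, so `θ (-∞) = 2π m - 2π` when `m` of the four roots lie to the right.
Here `Im P (I * y) = y * Re σ` has the sign of `y` and `P 0 = k² > 0`, so `θ 0 ∈ 2πℤ` and `θ`
stays in `(θ 0, θ 0 + π)` for `y > 0` and in `(θ 0 - π, θ 0)` for `y < 0`. Comparing with the
limits forces `θ 0 = 2π` and `m = 2`.
-/

open Polynomial Real Filter Set Topology
open Complex (I)

theorem arctan_im_div_re_eq_arg {w : ℂ} (hw : 0 < w.re) :
    arctan (w.im / w.re) = Complex.arg w := by
  have h := Complex.abs_arg_lt_pi_div_two_iff.2 (Or.inl hw)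
  rw [← Complex.tan_arg, arctan_tan (abs_lt.1 h).1 (abs_lt.1 h).2]

/-- Unlike `Complex.arg`, this argument of `w` is continuous along every vertical line
`w.re = a ≠ 0`. -/
noncomputable def vertArg (w : ℂ) : ℝ := arctan (w.im / w.re) + if w.re < 0 then π else 0

theorem norm_mul_exp_vertArg {w : ℂ} (hw : w.re ≠ 0) :
    (‖w‖ : ℂ) * Complex.exp (vertArg w * I) = w := by
  rcases hw.lt_or_gt with hneg | hpos
  · have h : arctan (w.im / w.re) = Complex.arg (-w) := by
      rw [← arctan_im_div_re_eq_arg (by rw [Complex.neg_re]; exact neg_pos.2 hneg),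
        Complex.neg_im, Complex.neg_re, neg_div_neg_eq]
    rw [vertArg, if_pos hneg, h, ← norm_neg w]
    push_cast
    rw [add_mul, Complex.exp_add, Complex.exp_pi_mul_I, ← mul_assoc,
      Complex.norm_mul_exp_arg_mul_I]
    ring
  · rw [vertArg, if_neg hpos.not_gt, add_zero, arctan_im_div_re_eq_arg hpos,
      Complex.norm_mul_exp_arg_mul_I]

theorem vertArg_I_mul_sub (z : ℂ) (y : ℝ) :
    vertArg (I * y - z) = arctan ((y - z.im) / -z.re) + if 0 < z.re then π else 0 := by
  simp [vertArg]

theorem tendsto_arctan_sub_div_atTop {c : ℝ} (hc : 0 < c) (b : ℝ) :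
    Tendsto (fun y => arctan ((y - b) / c)) atTop (𝓝 (π / 2)) :=
  (tendsto_arctan_atTop.mono_right nhdsWithin_le_nhds).comp
    ((tendsto_atTop_add_const_right _ (-b) tendsto_id).atTop_div_const hc)

theorem tendsto_arctan_sub_div_atBot {c : ℝ} (hc : 0 < c) (b : ℝ) :
    Tendsto (fun y => arctan ((y - b) / c)) atBot (𝓝 (-(π / 2))) :=
  (tendsto_arctan_atBot.mono_right nhdsWithin_le_nhds).comp
    ((tendsto_atBot_add_const_right _ (-b) tendsto_id).atBot_div_const hc)

theorem Multiset.sum_map_ite_zero {α M : Type*} [AddCommMonoid M] (p : α → Prop) [DecidablePred p]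
    (s : Multiset α) (c : M) :
    (s.map fun a => if p a then c else 0).sum = (s.filter p).card • c := by
  induction s using Multiset.induction with
  | empty => simp
  | cons a s ih => by_cases h : p a <;> simp [h, ih, succ_nsmul, add_comm]

theorem tendsto_vertArg_I_mul_sub_atTop {z : ℂ} (hz : z.re ≠ 0) :
    Tendsto (fun y : ℝ => vertArg (I * y - z)) atTop (𝓝 (π / 2)) := by
  simp_rw [vertArg_I_mul_sub]
  rcases hz.lt_or_gt with hneg | hpos
  · simpa [hneg.not_gt] using tendsto_arctan_sub_div_atTop (neg_pos.2 hneg) z.im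
  · have h := (tendsto_arctan_sub_div_atTop hpos z.im).neg.add_const π
    simp only [div_neg, arctan_neg, if_pos hpos]
    convert h using 2
    ring

theorem tendsto_vertArg_I_mul_sub_atBot {z : ℂ} (hz : z.re ≠ 0) :
    Tendsto (fun y : ℝ => vertArg (I * y - z)) atBot
      (𝓝 ((if 0 < z.re then 2 * π else 0) - π / 2)) := by
  simp_rw [vertArg_I_mul_sub]
  rcases hz.lt_or_gt with hneg | hpos
  · simpa [hneg.not_gt, neg_div] using tendsto_arctan_sub_div_atBot (neg_pos.2 hneg) z.im
  · have h := (tendsto_arctan_sub_div_atBot hpos z.im).neg.add_const π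
    simp only [div_neg, arctan_neg, if_pos hpos]
    convert h using 2
    ring

/-- A continuous choice of `arg (∏ z ∈ S, (I * y - z))` along the imaginary axis `y ↦ I * y`. -/
noncomputable def axisArg (S : Multiset ℂ) (y : ℝ) : ℝ :=
  (S.map fun z => vertArg (I * y - z)).sum

theorem continuous_axisArg (S : Multiset ℂ) : Continuous (axisArg S) := by
  refine continuous_multiset_sum S fun z _ => ?_
  simp_rw [vertArg_I_mul_sub]
  fun_prop

section axisArg

variable {S : Multiset ℂ}

theorem tendsto_axisArg_atTop (hS : ∀ z ∈ S, z.re ≠ 0) :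
    Tendsto (axisArg S) atTop (𝓝 (S.card * (π / 2))) := by
  have h := tendsto_multiset_sum S fun z hz => tendsto_vertArg_I_mul_sub_atTop (hS z hz)
  rwa [Multiset.map_const', Multiset.sum_replicate, nsmul_eq_mul] at h

theorem tendsto_axisArg_atBot (hS : ∀ z ∈ S, z.re ≠ 0) :
    Tendsto (axisArg S) atBot
      (𝓝 ((S.filter fun z => 0 < z.re).card * (2 * π) - S.card * (π / 2))) := by
  have h := tendsto_multiset_sum S fun z hz => tendsto_vertArg_I_mul_sub_atBot (hS z hz)
  rwa [Multiset.sum_map_sub, Multiset.sum_map_ite_zero, Multiset.map_const',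
    Multiset.sum_replicate, nsmul_eq_mul, nsmul_eq_mul] at h

theorem prod_I_mul_sub_eq_norm_mul_exp_axisArg (hS : ∀ z ∈ S, z.re ≠ 0) (y : ℝ) :
    (S.map fun z => I * y - z).prod =
      ‖(S.map fun z => I * y - z).prod‖ * Complex.exp (axisArg S y * I) := by
  induction S using Multiset.induction with
  | empty => simp [axisArg]
  | cons a s ih =>
    have ha : (I * y - a).re ≠ 0 := by simpa using hS a (Multiset.mem_cons_self a s)
    rw [Multiset.map_cons, Multiset.prod_cons, norm_mul, axisArg, Multiset.map_cons,
      Multiset.sum_cons, ← axisArg]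
    conv_lhs => rw [← norm_mul_exp_vertArg ha, ih fun z hz => hS z (Multiset.mem_cons_of_mem hz)]
    push_cast
    rw [add_mul, Complex.exp_add]
    ring

end axisArg

theorem mem_Ioo_of_sin_pos {f : ℝ → ℝ} (hf : Continuous f) (hf0 : f 0 = 0)
    (hsin : ∀ y, 0 < y → 0 < sin (f y)) {y : ℝ} (hy : 0 < y) : f y ∈ Ioo 0 π := by
  have avoid : ∀ c, sin c = 0 → c ≠ 0 → c ∉ f '' Icc 0 y := by
    rintro c hc hc0 ⟨x, hx, rfl⟩
    rcases hx.1.eq_or_lt with rfl | hx0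
    · exact hc0 hf0
    · exact (hsin x hx0).ne' hc
  by_contra h
  rcases not_and_or.1 h with hle | hge
  · have hlt : f y < -π := by
      by_contra h'
      exact (sin_nonpos_of_nonpos_of_neg_pi_le (not_lt.1 hle) (not_lt.1 h')).not_gt (hsin y hy)
    exact avoid (-π) (by simp) (by linarith [pi_pos])
      (intermediate_value_Icc' hy.le hf.continuousOn ⟨hlt.le, by linarith [pi_pos]⟩)
  · exact avoid π sin_pi pi_ne_zero
      (intermediate_value_Icc hy.le hf.continuousOn ⟨hf0.symm ▸ pi_pos.le, not_lt.1 hge⟩)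

theorem mem_Icc_of_tendsto_atTop_of_sin_pos {f : ℝ → ℝ} {L : ℝ} (hf : Continuous f)
    (hf0 : f 0 = 0) (hsin : ∀ y, 0 < y → 0 < sin (f y)) (hL : Tendsto f atTop (𝓝 L)) :
    L ∈ Icc 0 π :=
  isClosed_Icc.mem_of_tendsto hL <| (eventually_gt_atTop 0).mono fun _ hy =>
    Ioo_subset_Icc_self (mem_Ioo_of_sin_pos hf hf0 hsin hy)

theorem mem_Icc_of_tendsto_atBot_of_sin_neg {f : ℝ → ℝ} {L : ℝ} (hf : Continuous f)
    (hf0 : f 0 = 0) (hsin : ∀ y, y < 0 → sin (f y) < 0) (hL : Tendsto f atBot (𝓝 L)) :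
    L ∈ Icc (-π) 0 := by
  have h := mem_Icc_of_tendsto_atTop_of_sin_pos (f := fun y => -f (-y)) (by fun_prop)
    (by simp [hf0]) (fun y hy => by simpa using hsin (-y) (neg_lt_zero.2 hy))
    (hL.comp tendsto_neg_atTop_atBot).neg
  exact ⟨by linarith [h.2], by linarith [h.1]⟩

theorem eq_zero_of_intCast_mul_two_pi_mem_Icc {n : ℤ} (h : n * (2 * π) ∈ Icc (-π) π) : n = 0 := by
  have h1 : (n : ℝ) < 1 := by nlinarith [pi_pos, h.2]
  have h2 : (-1 : ℝ) < n := by nlinarith [pi_pos, h.1]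
  have : n < 1 := by exact_mod_cast h1
  have : -1 < n := by exact_mod_cast h2
  omega

theorem Polynomial.Monic.eval_I_mul_eq_norm_mul_exp_axisArg {p : ℂ[X]} (hp : p.Monic)
    (hroots : ∀ z ∈ p.roots, z.re ≠ 0) (y : ℝ) :
    p.eval (I * y) = ‖p.eval (I * y)‖ * Complex.exp (axisArg p.roots y * I) := by
  rw [(IsAlgClosed.splits p).eval_eq_prod_roots_of_monic hp]
  exact prod_I_mul_sub_eq_norm_mul_exp_axisArg hroots y

theorem Polynomial.re_ne_zero_of_mem_roots {p : ℂ[X]} {c : ℝ} (hc : 0 < c)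
    (h0 : p.eval 0 = c) (him_pos : ∀ y : ℝ, 0 < y → 0 < (p.eval (I * y)).im)
    (him_neg : ∀ y : ℝ, y < 0 → (p.eval (I * y)).im < 0) {z : ℂ} (hz : z ∈ p.roots) :
    z.re ≠ 0 := by
  intro hre
  have hroot : p.eval (I * z.im) = 0 := by
    rw [show (I * z.im : ℂ) = z by apply Complex.ext <;> simp [hre]]
    exact isRoot_of_mem_roots hz
  rcases lt_trichotomy z.im 0 with hneg | hzero | hpos
  · exact (him_neg _ hneg).ne (by rw [hroot, Complex.zero_im])
  · rw [hzero, Complex.ofReal_zero, mul_zero, h0] at hroot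
    exact hc.ne' (by exact_mod_cast hroot)
  · exact (him_pos _ hpos).ne' (by rw [hroot, Complex.zero_im])

theorem Polynomial.Monic.sin_axisArg_mul_norm {p : ℂ[X]} (hp : p.Monic)
    (hroots : ∀ z ∈ p.roots, z.re ≠ 0) (y : ℝ) :
    sin (axisArg p.roots y) * ‖p.eval (I * y)‖ = (p.eval (I * y)).im := by
  conv_rhs => rw [hp.eval_I_mul_eq_norm_mul_exp_axisArg hroots y, Complex.im_ofReal_mul,
    Complex.exp_ofReal_mul_I_im]
  ring

theorem Polynomial.Monic.exists_axisArg_zero_eq {p : ℂ[X]} (hp : p.Monic)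
    (hroots : ∀ z ∈ p.roots, z.re ≠ 0) {c : ℝ} (hc : 0 < c) (h0 : p.eval 0 = c) :
    ∃ j : ℤ, axisArg p.roots 0 = j * (2 * π) := by
  have h := hp.eval_I_mul_eq_norm_mul_exp_axisArg hroots 0
  rw [Complex.ofReal_zero, mul_zero, h0, Complex.norm_real, norm_of_nonneg hc.le] at h
  have hexp : Complex.exp (axisArg p.roots 0 * I) = 1 :=
    (mul_eq_left₀ (by exact_mod_cast hc.ne')).1 h.symm
  obtain ⟨j, hj⟩ := Complex.exp_eq_one_iff.1 hexp
  exact ⟨j, by simpa using congrArg Complex.im hj⟩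

theorem Polynomial.Monic.exists_int_bounds_card_roots_re_pos {p : ℂ[X]} (hp : p.Monic)
    {c : ℝ} (hc : 0 < c) (h0 : p.eval 0 = c)
    (him_pos : ∀ y : ℝ, 0 < y → 0 < (p.eval (I * y)).im)
    (him_neg : ∀ y : ℝ, y < 0 → (p.eval (I * y)).im < 0) :
    ∃ j : ℤ, p.natDegree * (π / 2) - j * (2 * π) ∈ Icc 0 π ∧
      (p.roots.filter fun z => 0 < z.re).card * (2 * π) - p.natDegree * (π / 2) - j * (2 * π)
        ∈ Icc (-π) 0 := by
  have hroots : ∀ z ∈ p.roots, z.re ≠ 0 := fun _ => re_ne_zero_of_mem_roots hc h0 him_pos him_neg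
  obtain ⟨j, hj⟩ := hp.exists_axisArg_zero_eq hroots hc h0
  set f := fun y => axisArg p.roots y - j * (2 * π)
  have hf : Continuous f := (continuous_axisArg _).sub continuous_const
  have hf0 : f 0 = 0 := by simp [f, hj]
  have hsin : ∀ y, sin (f y) * ‖p.eval (I * y)‖ = (p.eval (I * y)).im := fun y => by
    rw [sin_sub_int_mul_two_pi, hp.sin_axisArg_mul_norm hroots]
  rw [(IsAlgClosed.splits p).natDegree_eq_card_roots]
  refine ⟨j, mem_Icc_of_tendsto_atTop_of_sin_pos hf hf0 (fun y hy => ?_)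
    ((tendsto_axisArg_atTop hroots).sub_const _),
    mem_Icc_of_tendsto_atBot_of_sin_neg hf hf0 (fun y hy => ?_)
    ((tendsto_axisArg_atBot hroots).sub_const _)⟩
  · exact pos_of_mul_pos_left ((hsin y).symm ▸ him_pos y hy) (norm_nonneg _)
  · exact neg_of_mul_neg_left ((hsin y).symm ▸ him_neg y hy) (norm_nonneg _)

theorem card_filter_re_pos_add_card_filter_re_neg {S : Multiset ℂ} (hS : ∀ z ∈ S, z.re ≠ 0) :
    (S.filter fun z => 0 < z.re).card + (S.filter fun z => z.re < 0).card = S.card := by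
  rw [Multiset.filter_congr (q := fun z => ¬ 0 < z.re) fun z hz =>
      ⟨not_lt_of_gt, fun h => (not_lt.1 h).lt_of_ne (hS z hz)⟩,
    ← Multiset.card_add, Multiset.filter_add_not]

theorem quartic_monic (σ c : ℂ) : (X ^ 4 - X ^ 2 + C σ * X + C c : ℂ[X]).Monic := by
  monicity!

theorem quartic_natDegree (σ c : ℂ) : (X ^ 4 - X ^ 2 + C σ * X + C c : ℂ[X]).natDegree = 4 := by
  compute_degree!

theorem quartic_eval_I_mul_im (σ : ℂ) (k y : ℝ) :
    ((X ^ 4 - X ^ 2 + C σ * X + C ((k : ℂ) ^ 2) : ℂ[X]).eval (I * y)).im = y * σ.re := by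
  simp [mul_pow, Complex.I_pow_four, ← Complex.ofReal_pow]
  ring

open scoped Classical in
/-- For `Re σ > 0` and `k ≠ 0`, the quartic `P(λ) = λ⁴ - λ² + σλ + k²` has, counted with
multiplicity, exactly two roots with positive real part and two with negative real part. -/
theorem stmt_11 (σ : ℂ) (hσ : 0 < σ.re) (k : ℝ) (hk : k ≠ 0)
    (P : Polynomial ℂ)
    (hP : P = X ^ 4 - X ^ 2 + C σ * X + C ((k : ℂ) ^ 2)) :
    Multiset.card (P.roots.filter fun z => 0 < z.re) = 2 ∧
      Multiset.card (P.roots.filter fun z => z.re < 0) = 2 := by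
  have hc : 0 < k ^ 2 := by positivity
  have h0 : P.eval 0 = ((k ^ 2 : ℝ) : ℂ) := by simp [hP]
  have him : ∀ y : ℝ, (P.eval (I * y)).im = y * σ.re := hP ▸ quartic_eval_I_mul_im σ k
  have him_pos : ∀ y : ℝ, 0 < y → 0 < (P.eval (I * y)).im := fun y hy =>
    (him y).symm ▸ mul_pos hy hσ
  have him_neg : ∀ y : ℝ, y < 0 → (P.eval (I * y)).im < 0 := fun y hy =>
    (him y).symm ▸ mul_neg_of_neg_of_pos hy hσ
  have hdeg : P.natDegree = 4 := hP ▸ quartic_natDegree σ _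
  obtain ⟨j, htop, hbot⟩ :=
    (hP ▸ quartic_monic σ _ : P.Monic).exists_int_bounds_card_roots_re_pos hc h0 him_pos him_neg
  rw [hdeg] at htop hbot
  have hj : 1 - j = 0 := eq_zero_of_intCast_mul_two_pi_mem_Icc (by
    push_cast
    constructor <;> linarith [htop.1, htop.2, pi_pos])
  have hm : ((P.roots.filter fun z => 0 < z.re).card : ℤ) - 1 - j = 0 :=
    eq_zero_of_intCast_mul_two_pi_mem_Icc (by
      push_cast
      constructor <;> linarith [hbot.1, hbot.2, pi_pos])
  have hsum := card_filter_re_pos_add_card_filter_re_neg fun _ =>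
    re_ne_zero_of_mem_roots hc h0 him_pos him_neg
  rw [← (IsAlgClosed.splits P).natDegree_eq_card_roots, hdeg] at hsum
  omega
end

section
/- Let c be a real number with 1/2 < |c| < 1, let σ ∈ ℂ with Re σ ≠ 0, and let k be any real number. Then the polynomial P(λ) = λ⁴ − (1 − c²)λ² − 2cσλ + k² + σ² has no root on the imaginary axis, i.e. P(iμ) ≠ 0 for every real μ. -/
/-- For `1/2 < |c| < 1`, `Re σ ≠ 0` and any real `k`, the polynomial
`P(λ) = λ⁴ - (1-c²)λ² - 2cσλ + k² + σ²` (characteristic polynomial of the Boussinesq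
resolvent analysis) has no root on the imaginary axis. -/
theorem stmt_14 (c : ℝ) (hc1 : 1 / 2 < |c|) (hc2 : |c| < 1)
    (σ : ℂ) (hσ : σ.re ≠ 0) (k : ℝ) :
    ∀ μ : ℝ,
      (Complex.I * μ) ^ 4 - (1 - (c : ℂ) ^ 2) * (Complex.I * μ) ^ 2 -
        2 * (c : ℂ) * σ * (Complex.I * μ) + (k : ℂ) ^ 2 + σ ^ 2 ≠ 0 := by
  intro μ h
  rw [Complex.ext_iff] at h
  obtain ⟨h1, h2⟩ := h
  simp [Complex.ext_iff, pow_succ, Complex.mul_re, Complex.mul_im] at h1 h2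
  have key : σ.re * (σ.im - c * μ) = 0 := by nlinarith [h2]
  have hb : σ.im = c * μ := by
    rcases mul_eq_zero.mp key with h | h
    · exact absurd h hσ
    · linarith
  have ha : (0:ℝ) < σ.re ^ 2 := by positivity
  nlinarith [h1, hb, sq_nonneg μ, sq_nonneg (μ*μ), sq_nonneg k]
end

section
/- Let c > 1 be a real number, let σ ∈ ℂ with Re σ > 0, and let k be a nonzero real number. Then the polynomial P(λ) = cλ⁴ − σλ³ − (c − 1)λ² + σλ + k² has no root on the imaginary axis, i.e. P(iμ) ≠ 0 for every real μ. -/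
/-- For `c > 1`, `Re σ > 0` and `k ≠ 0`, the polynomial
`P(λ) = cλ⁴ - σλ³ - (c-1)λ² + σλ + k²` (characteristic polynomial of the KP-BBM
resolvent analysis) has no root on the imaginary axis. -/
theorem stmt_16 (c : ℝ) (hc : 1 < c) (σ : ℂ) (hσ : 0 < σ.re) (k : ℝ) (hk : k ≠ 0) :
    ∀ μ : ℝ,
      (c : ℂ) * (Complex.I * μ) ^ 4 - σ * (Complex.I * μ) ^ 3 -
        ((c : ℂ) - 1) * (Complex.I * μ) ^ 2 + σ * (Complex.I * μ) + (k : ℂ) ^ 2 ≠ 0 := by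
  intro μ h
  set r : ℝ := c * μ ^ 4 + (c - 1) * μ ^ 2 + k ^ 2 with hr
  set x : ℝ := μ ^ 3 + μ with hxdef
  have e2 : (Complex.I * (μ : ℂ)) ^ 2 = -((μ : ℂ) ^ 2) := by
    rw [mul_pow, Complex.I_sq]; ring
  have e3 : (Complex.I * (μ : ℂ)) ^ 3 = -(Complex.I * (μ : ℂ) ^ 3) := by
    rw [mul_pow, pow_succ, Complex.I_sq]; ring
  have e4 : (Complex.I * (μ : ℂ)) ^ 4 = (μ : ℂ) ^ 4 := by
    rw [mul_pow, show (4 : ℕ) = 2 * 2 from rfl, pow_mul, Complex.I_sq]; ring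
  have key : (c : ℂ) * (Complex.I * μ) ^ 4 - σ * (Complex.I * μ) ^ 3 -
        ((c : ℂ) - 1) * (Complex.I * μ) ^ 2 + σ * (Complex.I * μ) + (k : ℂ) ^ 2
      = (r : ℂ) + σ * (Complex.I * (x : ℂ)) := by
    rw [e2, e3, e4, hr, hxdef]; push_cast; ring
  rw [key] at h
  have him := congrArg Complex.im h
  have hre := congrArg Complex.re h
  simp only [Complex.add_im, Complex.add_re, Complex.mul_im, Complex.mul_re,
    Complex.I_re, Complex.I_im, Complex.ofReal_re, Complex.ofReal_im,
    Complex.zero_im, Complex.zero_re] at him hre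
  have him' : σ.re * x = 0 := by linarith
  have hre' : r - σ.im * x = 0 := by linarith
  rcases eq_or_ne μ 0 with hμ | hμ
  · subst hμ
    have : r = k ^ 2 := by rw [hr]; ring
    have hx0 : x = 0 := by rw [hxdef]; ring
    rw [this, hx0] at hre'
    exact hk (by nlinarith)
  · have hx : x ≠ 0 := by
      rw [hxdef]
      rcases lt_or_gt_of_ne hμ with h' | h'
      · nlinarith [pow_pos (neg_pos.mpr h') 3]
      · nlinarith [pow_pos h' 3]
    rcases mul_eq_zero.mp him' with h' | h'
    · linarith
    · exact hx h'
end
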